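/- arXiv:0909.1216 — 2 statements merged into one kernel-verified Lean document; each statement's English description precedes it below -/
import Mathlib

section
/- Suppose a sequence u : ℕ → ℂ satisfies u_n = κ·λ^n + Σᵢ Pᵢ(n)μᵢⁿ where κ ≠ 0, λ ≠ 0, the Pᵢ are polynomials, and |μᵢ| < |λ| for all i. Then u_n ≠ 0 for all sufficiently large n and lim_{n→∞} u_{n+1}/u_n = λ. -/
/-!
Dividing by `λⁿ` gives `u n / λⁿ = κ + Σᵢ Pᵢ(n) (μᵢ/λ)ⁿ`, and each `Pᵢ(n) (μᵢ/λ)ⁿ` tends to `0`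
because polynomial growth loses against geometric decay with ratio of norm `< 1`. So `u n / λⁿ → κ ≠ 0`,
and the ratio `u (n+1) / u n = λ · (u (n+1) / λⁿ⁺¹) / (u n / λⁿ)` tends to `λ · κ / κ = λ`.
-/

open Filter Polynomial Topology

theorem Polynomial.tendsto_eval_natCast_mul_pow_atTop_zero {R : Type*} [NormedRing R] (Q : R[X])
    {q : R} (hq : ‖q‖ < 1) : Tendsto (fun n : ℕ => Q.eval (n : R) * q ^ n) atTop (𝓝 0) := by
  have hexpand : ∀ n : ℕ, Q.eval (n : R) * q ^ n =
      ∑ j ∈ Finset.range (Q.natDegree + 1), Q.coeff j * ((n : R) ^ j * q ^ n) := by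
    intro n
    simp only [eval_eq_sum_range, Finset.sum_mul, mul_assoc]
  simp only [hexpand]
  rw [← Finset.sum_const_zero (s := Finset.range (Q.natDegree + 1))]
  refine tendsto_finsetSum _ fun j _ => ?_
  simpa using (tendsto_zero_iff_norm_tendsto_zero.mpr
    (summable_norm_pow_mul_geometric_of_norm_lt_one j hq).tendsto_atTop_zero).const_mul (Q.coeff j)

theorem tendsto_succ_div_self_of_tendsto_div_pow {𝕜 : Type*} [NormedField 𝕜] {u : ℕ → 𝕜}
    {κ lam : 𝕜} (hκ : κ ≠ 0) (hlam : lam ≠ 0)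
    (hu : Tendsto (fun n => u n / lam ^ n) atTop (𝓝 κ)) :
    (∀ᶠ n in atTop, u n ≠ 0) ∧ Tendsto (fun n => u (n + 1) / u n) atTop (𝓝 lam) := by
  have hne : ∀ᶠ n in atTop, u n ≠ 0 :=
    (hu.eventually_ne hκ).mono fun n hn hzero => hn (by rw [hzero, zero_div])
  refine ⟨hne, ?_⟩
  have hratio : ∀ᶠ n in atTop,
      lam * ((u (n + 1) / lam ^ (n + 1)) / (u n / lam ^ n)) = u (n + 1) / u n := by
    filter_upwards [hne] with n hn
    field_simp
    ring
  have hlim := ((hu.comp (tendsto_add_atTop_nat 1)).div hu hκ).const_mul lam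
  rw [div_self hκ, mul_one] at hlim
  exact hlim.congr' hratio

/-- If `u n = κ λ^n + Σᵢ Pᵢ(n) μᵢⁿ` with `κ ≠ 0`, `λ ≠ 0` and `|μᵢ| < |λ|` for all `i`,
then `u n ≠ 0` for all large `n` and `u (n+1) / u n → λ`. -/
theorem stmt2 (r : ℕ) (κ lam : ℂ) (hκ : κ ≠ 0) (hlam : lam ≠ 0)
    (μ : Fin r → ℂ) (P : Fin r → ℂ[X])
    (hμ : ∀ i, ‖μ i‖ < ‖lam‖)
    (u : ℕ → ℂ)
    (hu : ∀ n : ℕ, u n = κ * lam ^ n + ∑ i : Fin r, (P i).eval (n : ℂ) * μ i ^ n) :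
    (∀ᶠ n : ℕ in atTop, u n ≠ 0) ∧
      Tendsto (fun n : ℕ => u (n + 1) / u n) atTop (nhds lam) := by
  have hscaled : ∀ n : ℕ,
      u n / lam ^ n = κ + ∑ i : Fin r, (P i).eval (n : ℂ) * (μ i / lam) ^ n := by
    intro n
    rw [hu n, add_div, Finset.sum_div]
    simp only [div_pow, mul_div_assoc, mul_div_cancel_right₀ _ (pow_ne_zero n hlam)]
  have hsmall : ∀ i, ‖μ i / lam‖ < 1 := fun i => by
    rw [norm_div, div_lt_one (norm_pos_iff.mpr hlam)]
    exact hμ i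
  have hlim : Tendsto (fun n : ℕ => u n / lam ^ n) atTop (𝓝 κ) := by
    simp only [hscaled]
    simpa using tendsto_const_nhds.add (tendsto_finsetSum Finset.univ fun i _ =>
      (P i).tendsto_eval_natCast_mul_pow_atTop_zero (hsmall i))
  exact tendsto_succ_div_self_of_tendsto_div_pow hκ hlam hlim
end

section
/- Let {T_n}_{n∈ℕ} be invertible k×k complex matrices converging to T ∈ M_k(ℂ), where T has a simple eigenvalue 1 of strictly maximal modulus with right eigenvector u and left eigenvector v, uᵗv = 1. Then for every ε > 0 there exist m, N ∈ ℕ such that ‖T_{n+m}T_{n+m−1}⋯T_{n+1} − u·vᵗ‖ < ε for all n ≥ N. -/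
/-!
Put `Q = u vᵗ`. Then `TQ = QT = Q² = Q`, so `S = T - Q` satisfies `SQ = QS = 0` and
`T ^ (m + 1) = S ^ (m + 1) + Q`. Since `SQ = 0`, `(X - S)(X - Q) = X (X - T)`, hence
`charpoly S * charpoly Q = X ^ k * charpoly T`; as `1` is a root of `charpoly Q` and a simple root
of `charpoly T`, every nonzero root of `charpoly S` is a root of `charpoly T` other than `1`.
So the spectral radius of `S` is `< 1`, Gelfand's formula gives `S ^ m → 0`, and `T ^ m → Q`.
Finally, for fixed `m` the window product `T_{n+m} ⋯ T_{n+1}` tends to `T ^ m` as `n → ∞`.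
-/

open Filter Matrix Polynomial
open scoped Topology

attribute [local instance] Matrix.linftyOpNormedAddCommGroup Matrix.linftyOpNormedRing
  Matrix.linftyOpNormedAlgebra

theorem tendsto_prod_window {M : Type*} [Monoid M] [TopologicalSpace M] [ContinuousMul M]
    {T : ℕ → M} {L : M} (hT : Tendsto T atTop (𝓝 L)) {P : ℕ → ℕ → M}
    (hP0 : ∀ n, P n 0 = 1) (hPs : ∀ n m, P n (m + 1) = T (n + m + 1) * P n m) (m : ℕ) :
    Tendsto (fun n => P n m) atTop (𝓝 (L ^ m)) := by
  induction m with
  | zero => simp only [hP0, pow_zero, tendsto_const_nhds]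
  | succ m ih =>
    simp only [hPs, pow_succ']
    exact (hT.comp (tendsto_add_atTop_nat (m + 1))).mul ih

theorem add_pow_succ_of_orthogonal {R : Type*} [Semiring R] {s e : R} (hse : s * e = 0)
    (hes : e * s = 0) (he : IsIdempotentElem e) (n : ℕ) :
    (s + e) ^ (n + 1) = s ^ (n + 1) + e := by
  induction n with
  | zero => simp
  | succ n ih =>
    have hpe : s ^ (n + 1) * e = 0 := by rw [pow_succ, mul_assoc, hse, mul_zero]
    rw [pow_succ, ih, add_mul, mul_add, mul_add, hpe, hes, he.eq, ← pow_succ, add_zero, zero_add]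

theorem tendsto_pow_add_of_orthogonal {R : Type*} [Semiring R] [TopologicalSpace R]
    [ContinuousAdd R] {s e : R} (hse : s * e = 0) (hes : e * s = 0) (he : IsIdempotentElem e)
    (hs : Tendsto (s ^ ·) atTop (𝓝 0)) : Tendsto ((s + e) ^ ·) atTop (𝓝 e) := by
  rw [← tendsto_add_atTop_iff_nat 1]
  simpa only [add_pow_succ_of_orthogonal hse hes he, zero_add] using
    ((tendsto_add_atTop_iff_nat 1).mpr hs).add_const e

theorem tendsto_pow_nhds_zero_of_spectralRadius_lt_one {A : Type*} [NormedRing A]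
    [NormedAlgebra ℂ A] [CompleteSpace A] {a : A} (ha : spectralRadius ℂ a < 1) :
    Tendsto (a ^ ·) atTop (𝓝 0) := by
  obtain ⟨r, har, hr1⟩ := ENNReal.lt_iff_exists_nnreal_btwn.mp ha
  have hgelfand := spectrum.pow_nnnorm_pow_one_div_tendsto_nhds_spectralRadius a
  have hbound : ∀ᶠ n : ℕ in atTop, ‖a ^ n‖ ≤ (r : ℝ) ^ n := by
    filter_upwards [hgelfand.eventually_lt_const har, eventually_gt_atTop 0] with n hn hn0
    rw [one_div, ENNReal.rpow_inv_lt_iff (by positivity), ENNReal.rpow_natCast] at hn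
    exact_mod_cast hn.le
  exact squeeze_zero_norm' hbound
    (tendsto_pow_atTop_nhds_zero_of_lt_one r.2 (by exact_mod_cast hr1))

theorem Matrix.tendsto_pow_nhds_zero_of_forall_isRoot_charpoly {n : Type*} [Fintype n]
    [DecidableEq n] (A : Matrix n n ℂ) (hA : ∀ μ, A.charpoly.IsRoot μ → ‖μ‖ < 1) :
    Tendsto (A ^ ·) atTop (𝓝 0) := by
  cases isEmpty_or_nonempty n
  · exact tendsto_const_nhds.congr fun _ => Subsingleton.elim _ _
  refine tendsto_pow_nhds_zero_of_spectralRadius_lt_one ?_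
  simpa using spectrum.spectralRadius_lt_of_forall_lt_of_nonempty (spectrum.nonempty A)
    (r := 1) fun μ hμ => by
      exact_mod_cast hA μ (Matrix.mem_spectrum_iff_isRoot_charpoly.mp hμ)

theorem Matrix.charpoly_mul_charpoly_of_mul_eq_zero {R n : Type*} [CommRing R] [Fintype n]
    [DecidableEq n] {A B : Matrix n n R} (h : A * B = 0) :
    A.charpoly * B.charpoly = X ^ Fintype.card n * (A + B).charpoly := by
  have hcharmatrix : charmatrix A * charmatrix B = scalar n (X : R[X]) * charmatrix (A + B) := by
    have hAB : (C : R →+* R[X]).mapMatrix A * (C : R →+* R[X]).mapMatrix B = 0 := by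
      rw [← map_mul, h, map_zero]
    simp only [charmatrix, map_add, sub_mul, mul_sub, mul_add, hAB,
      ← (scalar_commute (X : R[X]) (Commute.all X) ((C : R →+* R[X]).mapMatrix A)).eq]
    abel
  simpa [charpoly, det_mul] using congrArg det hcharmatrix

theorem Matrix.isRoot_charpoly_of_isRoot_charpoly_sub_vecMulVec {K n : Type*} [Field K]
    [Fintype n] [DecidableEq n] {T : Matrix n n K} {u v : n → K} (hu : T *ᵥ u = u)
    (huv : u ⬝ᵥ v = 1) (hroot : T.charpoly.rootMultiplicity 1 = 1) {μ : K} (hμ0 : μ ≠ 0)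
    (hμ : (T - vecMulVec u v).charpoly.IsRoot μ) : μ ≠ 1 ∧ T.charpoly.IsRoot μ := by
  set Q := vecMulVec u v
  have hSQ : (T - Q) * Q = 0 := by
    rw [sub_mul, mul_vecMulVec, hu, vecMulVec_mul_vecMulVec, dotProduct_comm, huv, one_smul,
      sub_self]
  have hmult : (T - Q).charpoly.rootMultiplicity μ + Q.charpoly.rootMultiplicity μ =
      T.charpoly.rootMultiplicity μ := by
    have hX : (X ^ Fintype.card n : K[X]).rootMultiplicity μ = 0 :=
      rootMultiplicity_eq_zero (by simp [hμ0])
    have hprod := charpoly_mul_charpoly_of_mul_eq_zero hSQ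
    rw [sub_add_cancel] at hprod
    rw [← rootMultiplicity_mul ((charpoly_monic _).mul (charpoly_monic _)).ne_zero, hprod,
      rootMultiplicity_mul ((monic_X_pow _).mul (charpoly_monic _)).ne_zero, hX, zero_add]
  have hS := (rootMultiplicity_pos (charpoly_monic (T - Q)).ne_zero).mpr hμ
  refine ⟨?_, (rootMultiplicity_pos (charpoly_monic T).ne_zero).mp (by omega)⟩
  rintro rfl
  have hQ1 : Q.charpoly.IsRoot 1 := by simp [Q, charpoly_vecMulVec, huv]
  have := (rootMultiplicity_pos (charpoly_monic Q).ne_zero).mpr hQ1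
  omega

theorem Matrix.tendsto_pow_nhds_vecMulVec {n : Type*} [Fintype n] [DecidableEq n]
    {T : Matrix n n ℂ} (hroot : T.charpoly.rootMultiplicity 1 = 1)
    (hmax : ∀ μ ∈ T.charpoly.roots, μ ≠ 1 → ‖μ‖ < 1) {u v : n → ℂ}
    (hu : T *ᵥ u = u) (hv : Tᵀ *ᵥ v = v) (huv : u ⬝ᵥ v = 1) :
    Tendsto (T ^ ·) atTop (𝓝 (vecMulVec u v)) := by
  set Q := vecMulVec u v
  have hQ : IsIdempotentElem Q := by
    rw [IsIdempotentElem, vecMulVec_mul_vecMulVec, dotProduct_comm, huv, one_smul]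
  have hSQ : (T - Q) * Q = 0 := by rw [sub_mul, mul_vecMulVec, hu, hQ.eq, sub_self]
  have hQS : Q * (T - Q) = 0 := by
    rw [mul_sub, vecMulVec_mul, ← mulVec_transpose, hv, hQ.eq, sub_self]
  have hS : ∀ μ, (T - Q).charpoly.IsRoot μ → ‖μ‖ < 1 := by
    intro μ hμ
    rcases eq_or_ne μ 0 with rfl | hμ0
    · simp
    obtain ⟨hμ1, hTμ⟩ :=
      isRoot_charpoly_of_isRoot_charpoly_sub_vecMulVec hu huv hroot hμ0 hμ
    exact hmax μ ((mem_roots (charpoly_monic T).ne_zero).mpr hTμ) hμ1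
  simpa using tendsto_pow_add_of_orthogonal hSQ hQS hQ
    ((T - Q).tendsto_pow_nhds_zero_of_forall_isRoot_charpoly hS)

theorem stmt15_general (k : ℕ) (T : ℕ → Matrix (Fin k) (Fin k) ℂ)
    (Tlim : Matrix (Fin k) (Fin k) ℂ)
    (hconv : Tendsto T atTop (nhds Tlim))
    (hroot : (Matrix.charpoly Tlim).rootMultiplicity 1 = 1)
    (hmax : ∀ μ ∈ (Matrix.charpoly Tlim).roots, μ ≠ 1 → ‖μ‖ < 1)
    (u v : Fin k → ℂ)
    (hu : Tlim.mulVec u = u) (hv : Tlimᵀ.mulVec v = v) (huv : u ⬝ᵥ v = 1)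
    (P : ℕ → ℕ → Matrix (Fin k) (Fin k) ℂ)
    (hP0 : ∀ n, P n 0 = 1)
    (hPs : ∀ n m, P n (m + 1) = T (n + m + 1) * P n m) :
    ∀ ε : ℝ, 0 < ε → ∃ m N : ℕ, ∀ n ≥ N, ‖P n m - vecMulVec u v‖ < ε := by
  intro ε hε
  obtain ⟨m, hm⟩ := ((tendsto_pow_nhds_vecMulVec hroot hmax hu hv huv).eventually
    (Metric.ball_mem_nhds _ hε)).exists
  obtain ⟨N, hN⟩ := eventually_atTop.mp ((tendsto_prod_window hconv hP0 hPs m).eventually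
    (Metric.isOpen_ball.mem_nhds hm))
  exact ⟨m, N, fun n hn => by simpa [dist_eq_norm] using hN n hn⟩

/-- Parametric-free Poincaré–Perron step: if invertible matrices `T_n` converge to `T`,
which has a simple eigenvalue `1` of strictly maximal modulus with right eigenvector `u`
and left eigenvector `v`, `uᵗ v = 1`, then for every `ε > 0` there are `m, N` with
`‖T_{n+m} ⋯ T_{n+1} - u vᵗ‖ < ε` for all `n ≥ N`. -/
theorem stmt15 (k : ℕ) (T : ℕ → Matrix (Fin k) (Fin k) ℂ)
    (hinv : ∀ n, IsUnit (T n)) (Tlim : Matrix (Fin k) (Fin k) ℂ)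
    (hconv : Tendsto T atTop (nhds Tlim))
    (hroot : (Matrix.charpoly Tlim).rootMultiplicity 1 = 1)
    (hmax : ∀ μ ∈ (Matrix.charpoly Tlim).roots, μ ≠ 1 → ‖μ‖ < 1)
    (u v : Fin k → ℂ)
    (hu : Tlim.mulVec u = u) (hv : Tlimᵀ.mulVec v = v) (huv : u ⬝ᵥ v = 1)
    (P : ℕ → ℕ → Matrix (Fin k) (Fin k) ℂ)
    (hP0 : ∀ n, P n 0 = 1)
    (hPs : ∀ n m, P n (m + 1) = T (n + m + 1) * P n m) :
    ∀ ε : ℝ, 0 < ε → ∃ m N : ℕ, ∀ n ≥ N, ‖P n m - vecMulVec u v‖ < ε :=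
  stmt15_general k T Tlim hconv hroot hmax u v hu hv huv P hP0 hPs
end
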